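/- arXiv:1401.7942 — 2 statements merged into one kernel-verified Lean document; each statement's English description precedes it below -/
import Mathlib

section
/- Let u, w : ℝ⁵ → ℝ be smooth functions of (t,x,y,z,τ), let μ ≠ 0, and suppose that for each fixed τ: (i) u satisfies u_{ty} = u_z u_{xy} − u_y u_{xz}; (ii) w satisfies w_y = μ(u_y w_x − u_{xy} w) and w_z = μ(u_z w_x − w_t − u_{xz} w); and (iii) u_τ = w. Then the function ũ = u_τ = w satisfies the linearized Martínez Alonso–Shabat equation w_{ty} = u_z w_{xy} − u_y w_{xz} + u_{xy} w_z − u_{xz} w_y, so that the flow u_τ = w is compatible with the Martínez Alonso–Shabat equation, i.e., ∂_τ(u_{ty} − u_z u_{xy} + u_y u_{xz}) = 0. -/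
/-- Partial derivative of `f : (Fin n → ℝ) → ℝ` in the `i`-th coordinate direction. -/
noncomputable def pd (n : ℕ) (i : Fin n) (f : (Fin n → ℝ) → ℝ) : (Fin n → ℝ) → ℝ :=
  fun p => fderiv ℝ f p (Pi.single i 1)


lemma pd_congr {n : ℕ} {i : Fin n} {f g : (Fin n → ℝ) → ℝ} (h : ∀ p, f p = g p) :
    pd n i f = pd n i g := congrArg (pd n i) (funext h)

lemma pd_smooth {n : ℕ} {i : Fin n} {f : (Fin n → ℝ) → ℝ} (hf : ContDiff ℝ (⊤ : ℕ∞) f) :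
    ContDiff ℝ (⊤ : ℕ∞) (pd n i f) := by
  unfold pd
  exact (hf.fderiv_right (by simp)).clm_apply contDiff_const

lemma pd_mul {n : ℕ} {i : Fin n} {a b : (Fin n → ℝ) → ℝ}
    (ha : ContDiff ℝ (⊤ : ℕ∞) a) (hb : ContDiff ℝ (⊤ : ℕ∞) b) (p : Fin n → ℝ) :
    pd n i (fun q => a q * b q) p = pd n i a p * b p + a p * pd n i b p := by
  unfold pd
  rw [fderiv_fun_mul (ha.differentiable (by simp) p) (hb.differentiable (by simp) p)]
  simp [smul_eq_mul]
  ring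

lemma pd_sub {n : ℕ} {i : Fin n} {a b : (Fin n → ℝ) → ℝ}
    (ha : ContDiff ℝ (⊤ : ℕ∞) a) (hb : ContDiff ℝ (⊤ : ℕ∞) b) (p : Fin n → ℝ) :
    pd n i (fun q => a q - b q) p = pd n i a p - pd n i b p := by
  unfold pd
  rw [fderiv_fun_sub (ha.differentiable (by simp) p) (hb.differentiable (by simp) p)]
  simp

lemma pd_add {n : ℕ} {i : Fin n} {a b : (Fin n → ℝ) → ℝ}
    (ha : ContDiff ℝ (⊤ : ℕ∞) a) (hb : ContDiff ℝ (⊤ : ℕ∞) b) (p : Fin n → ℝ) :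
    pd n i (fun q => a q + b q) p = pd n i a p + pd n i b p := by
  unfold pd
  rw [fderiv_fun_add (ha.differentiable (by simp) p) (hb.differentiable (by simp) p)]
  simp

lemma pd_const_mul {n : ℕ} {i : Fin n} (c : ℝ) {a : (Fin n → ℝ) → ℝ}
    (ha : ContDiff ℝ (⊤ : ℕ∞) a) (p : Fin n → ℝ) :
    pd n i (fun q => c * a q) p = c * pd n i a p := by
  unfold pd
  rw [fderiv_const_mul (ha.differentiable (by simp) p) c]
  simp

lemma pd_swap {n : ℕ} {i j : Fin n} {f : (Fin n → ℝ) → ℝ} (hf : ContDiff ℝ (⊤ : ℕ∞) f) :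
    pd n i (pd n j f) = pd n j (pd n i f) := by
  funext p
  have key : ∀ (k l : Fin n), pd n k (pd n l f) p
      = fderiv ℝ (fderiv ℝ f) p (Pi.single k 1) (Pi.single l 1) := by
    intro k l
    unfold pd
    rw [fderiv_clm_apply (((hf.fderiv_right (m := (⊤ : ℕ∞)) (by simp)).differentiable (by simp)) p)
      (differentiableAt_const _)]
    simp
  rw [key i j, key j i]
  exact (hf.contDiffAt.isSymmSndFDerivAt (by rw [minSmoothness_of_isRCLikeNormedField]; exact WithTop.coe_le_coe.mpr (le_top : (2 : ℕ∞) ≤ ⊤))) _ _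

/-- shape `a*b - c*d` -/
lemma pd_shape0 {n : ℕ} {i : Fin n} {a b c d : (Fin n → ℝ) → ℝ}
    (ha : ContDiff ℝ (⊤ : ℕ∞) a) (hb : ContDiff ℝ (⊤ : ℕ∞) b) (hc : ContDiff ℝ (⊤ : ℕ∞) c) (hd : ContDiff ℝ (⊤ : ℕ∞) d)
    (p : Fin n → ℝ) :
    pd n i (fun q => a q * b q - c q * d q) p
      = (pd n i a p * b p + a p * pd n i b p) - (pd n i c p * d p + c p * pd n i d p) := by
  rw [pd_sub (a := fun q => a q * b q) (b := fun q => c q * d q) (ha.mul hb) (hc.mul hd),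
    pd_mul ha hb, pd_mul hc hd]

/-- shape `mu * (a*b - c*d)` -/
lemma pd_shape1 {n : ℕ} {i : Fin n} (mu : ℝ) {a b c d : (Fin n → ℝ) → ℝ}
    (ha : ContDiff ℝ (⊤ : ℕ∞) a) (hb : ContDiff ℝ (⊤ : ℕ∞) b) (hc : ContDiff ℝ (⊤ : ℕ∞) c) (hd : ContDiff ℝ (⊤ : ℕ∞) d)
    (p : Fin n → ℝ) :
    pd n i (fun q => mu * (a q * b q - c q * d q)) p
      = mu * ((pd n i a p * b p + a p * pd n i b p)
          - (pd n i c p * d p + c p * pd n i d p)) := by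
  rw [pd_const_mul mu (a := fun q => a q * b q - c q * d q) ((ha.mul hb).sub (hc.mul hd)),
    pd_shape0 ha hb hc hd]

/-- shape `mu * (a*b - e - c*d)` -/
lemma pd_shape2 {n : ℕ} {i : Fin n} (mu : ℝ) {a b e c d : (Fin n → ℝ) → ℝ}
    (ha : ContDiff ℝ (⊤ : ℕ∞) a) (hb : ContDiff ℝ (⊤ : ℕ∞) b) (he : ContDiff ℝ (⊤ : ℕ∞) e)
    (hc : ContDiff ℝ (⊤ : ℕ∞) c) (hd : ContDiff ℝ (⊤ : ℕ∞) d) (p : Fin n → ℝ) :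
    pd n i (fun q => mu * (a q * b q - e q - c q * d q)) p
      = mu * ((pd n i a p * b p + a p * pd n i b p) - pd n i e p
          - (pd n i c p * d p + c p * pd n i d p)) := by
  rw [pd_const_mul mu (a := fun q => a q * b q - e q - c q * d q)
      (((ha.mul hb).sub he).sub (hc.mul hd)),
    pd_sub (a := fun q => a q * b q - e q) (b := fun q => c q * d q)
      ((ha.mul hb).sub he) (hc.mul hd),
    pd_sub (a := fun q => a q * b q) (b := e) (ha.mul hb) he,
    pd_mul ha hb, pd_mul hc hd]

/-- shape `a - b*c + d*e` -/
lemma pd_shape3 {n : ℕ} {i : Fin n} {a b c d e : (Fin n → ℝ) → ℝ}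
    (ha : ContDiff ℝ (⊤ : ℕ∞) a) (hb : ContDiff ℝ (⊤ : ℕ∞) b) (hc : ContDiff ℝ (⊤ : ℕ∞) c)
    (hd : ContDiff ℝ (⊤ : ℕ∞) d) (he : ContDiff ℝ (⊤ : ℕ∞) e) (p : Fin n → ℝ) :
    pd n i (fun q => a q - b q * c q + d q * e q) p
      = pd n i a p - (pd n i b p * c p + b p * pd n i c p)
          + (pd n i d p * e p + d p * pd n i e p) := by
  rw [pd_add (a := fun q => a q - b q * c q) (b := fun q => d q * e q)
      (ha.sub (hb.mul hc)) (hd.mul he),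
    pd_sub (a := a) (b := fun q => b q * c q) ha (hb.mul hc),
    pd_mul hb hc, pd_mul hd he]
/-- 5D coordinates `(t,x,y,z,τ) = (0,1,2,3,4)`. If `u` solves the Martínez Alonso–Shabat
equation, `w` solves the covering with parameter `μ ≠ 0`, and `u_τ = w`, then `w`
satisfies the linearized equation and the flow preserves the equation:
`∂_τ(u_ty − u_z u_xy + u_y u_xz) = 0`. -/
theorem stmt_10 (u w : (Fin 5 → ℝ) → ℝ) (hu : ContDiff ℝ (⊤ : ℕ∞) u) (hw : ContDiff ℝ (⊤ : ℕ∞) w)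
    (mu : ℝ) (hmu : mu ≠ 0)
    (hMASh : ∀ p, pd 5 2 (pd 5 0 u) p
        = pd 5 3 u p * pd 5 2 (pd 5 1 u) p - pd 5 2 u p * pd 5 3 (pd 5 1 u) p)
    (h1 : ∀ p, pd 5 2 w p
        = mu * (pd 5 2 u p * pd 5 1 w p - pd 5 2 (pd 5 1 u) p * w p))
    (h2 : ∀ p, pd 5 3 w p
        = mu * (pd 5 3 u p * pd 5 1 w p - pd 5 0 w p - pd 5 3 (pd 5 1 u) p * w p))
    (htau : ∀ p, pd 5 4 u p = w p) :
    (∀ p, pd 5 2 (pd 5 0 w) p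
        = pd 5 3 u p * pd 5 2 (pd 5 1 w) p - pd 5 2 u p * pd 5 3 (pd 5 1 w) p
          + pd 5 2 (pd 5 1 u) p * pd 5 3 w p - pd 5 3 (pd 5 1 u) p * pd 5 2 w p) ∧
    (∀ p, pd 5 4
        (fun r => pd 5 2 (pd 5 0 u) r - pd 5 3 u r * pd 5 2 (pd 5 1 u) r
            + pd 5 2 u r * pd 5 3 (pd 5 1 u) r) p = 0) := by
  -- smoothness of the various derivatives
  have su0 : ContDiff ℝ (⊤ : ℕ∞) (pd 5 0 u) := pd_smooth hu
  have su1 : ContDiff ℝ (⊤ : ℕ∞) (pd 5 1 u) := pd_smooth hu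
  have su2 : ContDiff ℝ (⊤ : ℕ∞) (pd 5 2 u) := pd_smooth hu
  have su3 : ContDiff ℝ (⊤ : ℕ∞) (pd 5 3 u) := pd_smooth hu
  have su20 : ContDiff ℝ (⊤ : ℕ∞) (pd 5 2 (pd 5 0 u)) := pd_smooth su0
  have su21 : ContDiff ℝ (⊤ : ℕ∞) (pd 5 2 (pd 5 1 u)) := pd_smooth su1
  have su31 : ContDiff ℝ (⊤ : ℕ∞) (pd 5 3 (pd 5 1 u)) := pd_smooth su1
  have sw0 : ContDiff ℝ (⊤ : ℕ∞) (pd 5 0 w) := pd_smooth hw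
  have sw1 : ContDiff ℝ (⊤ : ℕ∞) (pd 5 1 w) := pd_smooth hw
  -- commutation rewrites (function level)
  have c_w02 : pd 5 0 (pd 5 2 w) = pd 5 2 (pd 5 0 w) := pd_swap hw
  have c_w12 : pd 5 1 (pd 5 2 w) = pd 5 2 (pd 5 1 w) := pd_swap hw
  have c_w13 : pd 5 1 (pd 5 3 w) = pd 5 3 (pd 5 1 w) := pd_swap hw
  have c_w01 : pd 5 0 (pd 5 1 w) = pd 5 1 (pd 5 0 w) := pd_swap hw
  have c_w10 : pd 5 1 (pd 5 0 w) = pd 5 0 (pd 5 1 w) := (pd_swap hw).symm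
  have c_u02 : pd 5 0 (pd 5 2 u) = pd 5 2 (pd 5 0 u) := pd_swap hu
  have c_u01 : pd 5 0 (pd 5 1 u) = pd 5 1 (pd 5 0 u) := pd_swap hu
  have c_u12 : pd 5 1 (pd 5 2 u) = pd 5 2 (pd 5 1 u) := pd_swap hu
  have c_u13 : pd 5 1 (pd 5 3 u) = pd 5 3 (pd 5 1 u) := pd_swap hu
  have c_u021 : pd 5 0 (pd 5 2 (pd 5 1 u)) = pd 5 2 (pd 5 0 (pd 5 1 u)) := pd_swap su1
  have c_u121 : pd 5 1 (pd 5 2 (pd 5 1 u)) = pd 5 2 (pd 5 1 (pd 5 1 u)) := pd_swap su1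
  have c_u131 : pd 5 1 (pd 5 3 (pd 5 1 u)) = pd 5 3 (pd 5 1 (pd 5 1 u)) := pd_swap su1
  have c_u120 : pd 5 1 (pd 5 2 (pd 5 0 u)) = pd 5 2 (pd 5 1 (pd 5 0 u)) := pd_swap su0
  -- Part 1
  have part1 : ∀ p, pd 5 2 (pd 5 0 w) p
      = pd 5 3 u p * pd 5 2 (pd 5 1 w) p - pd 5 2 u p * pd 5 3 (pd 5 1 w) p
        + pd 5 2 (pd 5 1 u) p * pd 5 3 w p - pd 5 3 (pd 5 1 u) p * pd 5 2 w p := by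
    intro p
    -- A: ∂_t of h1
    have hA : pd 5 2 (pd 5 0 w) p
        = mu * ((pd 5 2 (pd 5 0 u) p * pd 5 1 w p + pd 5 2 u p * pd 5 0 (pd 5 1 w) p)
            - (pd 5 2 (pd 5 1 (pd 5 0 u)) p * w p + pd 5 2 (pd 5 1 u) p * pd 5 0 w p)) := by
      have e : pd 5 0 (pd 5 2 w) p
          = mu * ((pd 5 0 (pd 5 2 u) p * pd 5 1 w p + pd 5 2 u p * pd 5 0 (pd 5 1 w) p)
              - (pd 5 0 (pd 5 2 (pd 5 1 u)) p * w p + pd 5 2 (pd 5 1 u) p * pd 5 0 w p)) := by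
        rw [pd_congr (i := (0 : Fin 5)) h1]
        exact pd_shape1 mu su2 sw1 su21 hw p
      rw [c_w02, c_u02, c_u021, c_u01] at e
      exact e
    -- B: ∂_x of h1
    have hB : pd 5 2 (pd 5 1 w) p
        = mu * ((pd 5 2 (pd 5 1 u) p * pd 5 1 w p + pd 5 2 u p * pd 5 1 (pd 5 1 w) p)
            - (pd 5 2 (pd 5 1 (pd 5 1 u)) p * w p + pd 5 2 (pd 5 1 u) p * pd 5 1 w p)) := by
      have e : pd 5 1 (pd 5 2 w) p
          = mu * ((pd 5 1 (pd 5 2 u) p * pd 5 1 w p + pd 5 2 u p * pd 5 1 (pd 5 1 w) p)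
              - (pd 5 1 (pd 5 2 (pd 5 1 u)) p * w p + pd 5 2 (pd 5 1 u) p * pd 5 1 w p)) := by
        rw [pd_congr (i := (1 : Fin 5)) h1]
        exact pd_shape1 mu su2 sw1 su21 hw p
      rw [c_w12, c_u12, c_u121] at e
      exact e
    -- C: ∂_x of h2
    have hC : pd 5 3 (pd 5 1 w) p
        = mu * ((pd 5 3 (pd 5 1 u) p * pd 5 1 w p + pd 5 3 u p * pd 5 1 (pd 5 1 w) p)
            - pd 5 0 (pd 5 1 w) p
            - (pd 5 3 (pd 5 1 (pd 5 1 u)) p * w p + pd 5 3 (pd 5 1 u) p * pd 5 1 w p)) := by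
      have e : pd 5 1 (pd 5 3 w) p
          = mu * ((pd 5 1 (pd 5 3 u) p * pd 5 1 w p + pd 5 3 u p * pd 5 1 (pd 5 1 w) p)
              - pd 5 1 (pd 5 0 w) p
              - (pd 5 1 (pd 5 3 (pd 5 1 u)) p * w p + pd 5 3 (pd 5 1 u) p * pd 5 1 w p)) := by
        rw [pd_congr (i := (1 : Fin 5)) h2]
        exact pd_shape2 mu su3 sw1 sw0 su31 hw p
      rw [c_w13, c_u13, c_u131, c_w10] at e
      exact e
    -- G: ∂_x of MASh
    have hG : pd 5 2 (pd 5 1 (pd 5 0 u)) p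
        = (pd 5 3 (pd 5 1 u) p * pd 5 2 (pd 5 1 u) p
            + pd 5 3 u p * pd 5 2 (pd 5 1 (pd 5 1 u)) p)
          - (pd 5 2 (pd 5 1 u) p * pd 5 3 (pd 5 1 u) p
            + pd 5 2 u p * pd 5 3 (pd 5 1 (pd 5 1 u)) p) := by
      have e : pd 5 1 (pd 5 2 (pd 5 0 u)) p
          = (pd 5 1 (pd 5 3 u) p * pd 5 2 (pd 5 1 u) p
              + pd 5 3 u p * pd 5 1 (pd 5 2 (pd 5 1 u)) p)
            - (pd 5 1 (pd 5 2 u) p * pd 5 3 (pd 5 1 u) p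
              + pd 5 2 u p * pd 5 1 (pd 5 3 (pd 5 1 u)) p) := by
        rw [pd_congr (i := (1 : Fin 5)) hMASh]
        exact pd_shape0 su3 su21 su2 su31 p
      rw [c_u120, c_u13, c_u121, c_u12, c_u131] at e
      exact e
    linear_combination hA - pd 5 3 u p * hB + pd 5 2 u p * hC
      - pd 5 2 (pd 5 1 u) p * h2 p + pd 5 3 (pd 5 1 u) p * h1 p
      + mu * pd 5 1 w p * hMASh p - mu * w p * hG
  refine ⟨part1, ?_⟩
  intro p
  have e : pd 5 4 (fun r => pd 5 2 (pd 5 0 u) r - pd 5 3 u r * pd 5 2 (pd 5 1 u) r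
      + pd 5 2 u r * pd 5 3 (pd 5 1 u) r) p
      = pd 5 4 (pd 5 2 (pd 5 0 u)) p
        - (pd 5 4 (pd 5 3 u) p * pd 5 2 (pd 5 1 u) p
            + pd 5 3 u p * pd 5 4 (pd 5 2 (pd 5 1 u)) p)
        + (pd 5 4 (pd 5 2 u) p * pd 5 3 (pd 5 1 u) p
            + pd 5 2 u p * pd 5 4 (pd 5 3 (pd 5 1 u)) p) :=
    pd_shape3 su20 su3 su21 su2 su31 p
  have hw4 : pd 5 4 u = w := funext htau
  have r1 : pd 5 4 (pd 5 2 (pd 5 0 u)) = pd 5 2 (pd 5 0 w) := by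
    rw [pd_swap su0, pd_swap hu, hw4]
  have r2 : pd 5 4 (pd 5 3 u) = pd 5 3 w := by rw [pd_swap hu, hw4]
  have r3 : pd 5 4 (pd 5 2 (pd 5 1 u)) = pd 5 2 (pd 5 1 w) := by
    rw [pd_swap su1, pd_swap hu, hw4]
  have r4 : pd 5 4 (pd 5 2 u) = pd 5 2 w := by rw [pd_swap hu, hw4]
  have r5 : pd 5 4 (pd 5 3 (pd 5 1 u)) = pd 5 3 (pd 5 1 w) := by
    rw [pd_swap su1, pd_swap hu, hw4]
  rw [e, r1, r2, r3, r4, r5]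
  linear_combination part1 p
end

section
/- Fix i, j ≥ 1 and let (w_m)_{m≥0} be smooth functions of x (and of two times τᵢ, τⱼ) whose evolutions are given by (w_m)_{τᵢ} = Σ_{k=0}^{i−1}(w_{i+m−k−1}(w_k)_x − w_k (w_{i+m−k−1})_x) and (w_m)_{τⱼ} = Σ_{k=0}^{j−1}(w_{j+m−k−1}(w_k)_x − w_k (w_{j+m−k−1})_x) for all m ≥ 0. Then the two flows commute on each w_m: ∂_{τᵢ}∂_{τⱼ} w_m = ∂_{τⱼ}∂_{τᵢ} w_m for all m ≥ 0, where the mixed derivatives are computed by substituting the evolution equations. -/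
noncomputable section AuxAlgebra

/-- The flow sum `Q_i(n) = Σ_{k<i} (u_{i+n-k-1} v_k - u_k v_{i+n-k-1})`. -/
def Qs (u v : ℕ → ℝ) (i n : ℕ) : ℝ :=
  ∑ k ∈ Finset.range i, (u (i + n - k - 1) * v k - u k * v (i + n - k - 1))

/-- The formally substituted mixed derivative of the `i`-flow by the `j`-flow. -/
def Fs (u v z : ℕ → ℝ) (i j m : ℕ) : ℝ :=
  ∑ k ∈ Finset.range i,
    (Qs u v j (i + m - k - 1) * v k + u (i + m - k - 1) * Qs u z j k
      - Qs u v j k * v (i + m - k - 1) - u k * Qs u z j (i + m - k - 1))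

lemma sum_reflect_antisym (g : ℕ → ℝ) (s i j : ℕ) (hij : i + j = s + 1)
    (hg : ∀ k ≤ s, g k = - g (s - k)) :
    ∑ k ∈ Finset.range i, g k = ∑ k ∈ Finset.range j, g k := by
  have hrefl : ∑ k ∈ Finset.range (s + 1), g (s - k) = ∑ k ∈ Finset.range (s + 1), g k := by
    have := Finset.sum_range_reflect g (s + 1)
    simpa [Nat.add_sub_cancel] using this
  have htot : ∑ k ∈ Finset.range (s + 1), g k = 0 := by
    have h2 : ∑ k ∈ Finset.range (s + 1), g (s - k)
        = - ∑ k ∈ Finset.range (s + 1), g k := by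
      rw [← Finset.sum_neg_distrib]
      apply Finset.sum_congr rfl
      intro k hk
      simp only [Finset.mem_range] at hk
      have := hg (s - k) (by omega)
      have e : s - (s - k) = k := by omega
      rw [e] at this
      linarith
    rw [hrefl] at h2
    linarith
  have hsplit := Finset.sum_range_add_sum_Ico g (show i ≤ s + 1 by omega)
  have hIco : ∑ k ∈ Finset.Ico i (s+1), g k = - ∑ k ∈ Finset.range j, g k := by
    rw [Finset.sum_Ico_eq_sum_range]
    have hji : s + 1 - i = j := by omega
    rw [hji]
    have hcongr : ∀ k ∈ Finset.range j, g (i + k) = - g (j - 1 - k) := by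
      intro k hk
      simp only [Finset.mem_range] at hk
      have := hg (i + k) (by omega)
      have e : s - (i + k) = j - 1 - k := by omega
      rw [e] at this
      exact this
    rw [Finset.sum_congr rfl hcongr, Finset.sum_neg_distrib,
      Finset.sum_range_reflect g j]
  rw [hIco] at hsplit
  linarith

lemma Qs_symm (u v : ℕ → ℝ) (i j : ℕ) : Qs u v i j = Qs u v j i := by
  rcases Nat.eq_zero_or_pos (i + j) with h0 | hpos
  · have hi : i = 0 := by omega
    have hj : j = 0 := by omega
    rw [hi, hj]
  · have key := sum_reflect_antisym
        (fun k => u (i + j - 1 - k) * v k - u k * v (i + j - 1 - k))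
        (i + j - 1) i j (by omega) ?_
    · unfold Qs
      calc ∑ k ∈ Finset.range i, (u (i + j - k - 1) * v k - u k * v (i + j - k - 1))
          = ∑ k ∈ Finset.range i, (u (i+j-1-k) * v k - u k * v (i+j-1-k)) := by
            apply Finset.sum_congr rfl; intro k hk
            have e : i + j - k - 1 = i + j - 1 - k := by omega
            rw [e]
        _ = ∑ k ∈ Finset.range j, (u (i+j-1-k) * v k - u k * v (i+j-1-k)) := key
        _ = ∑ k ∈ Finset.range j, (u (j+i-k-1) * v k - u k * v (j+i-k-1)) := by
            apply Finset.sum_congr rfl; intro k hk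
            have e : i + j - 1 - k = j + i - k - 1 := by omega
            rw [e]
    · intro k hk
      have e : i + j - 1 - (i + j - 1 - k) = k := by omega
      rw [e]; ring

lemma Qs_zero (u v : ℕ → ℝ) (n : ℕ) : Qs u v 0 n = 0 := by simp [Qs]

lemma Qs_zero' (u v : ℕ → ℝ) (n : ℕ) : Qs u v n 0 = 0 := by
  rw [Qs_symm]; exact Qs_zero u v n

lemma Qs_succ (u v : ℕ → ℝ) (i n : ℕ) :
    Qs u v (i+1) n = Qs u v i (n+1) + (u n * v i - u i * v n) := by
  unfold Qs
  rw [Finset.sum_range_succ]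
  congr 1
  · apply Finset.sum_congr rfl
    intro k hk
    simp only [Finset.mem_range] at hk
    have e : i + 1 + n - k - 1 = i + (n+1) - k - 1 := by omega
    rw [e]
  · have e : i + 1 + n - i - 1 = n := by omega
    rw [e]

lemma Fs_succ_left (u v z : ℕ → ℝ) (i j m : ℕ) :
    Fs u v z (i+1) j m = Fs u v z i j (m+1)
      + (Qs u v j m * v i + u m * Qs u z j i - Qs u v j i * v m - u i * Qs u z j m) := by
  unfold Fs
  have h1 : ∀ k ∈ Finset.range i,
      (Qs u v j (i + 1 + m - k - 1) * v k + u (i + 1 + m - k - 1) * Qs u z j k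
        - Qs u v j k * v (i + 1 + m - k - 1) - u k * Qs u z j (i + 1 + m - k - 1))
      = (Qs u v j (i + (m+1) - k - 1) * v k + u (i + (m+1) - k - 1) * Qs u z j k
        - Qs u v j k * v (i + (m+1) - k - 1) - u k * Qs u z j (i + (m+1) - k - 1)) := by
    intro k hk
    simp only [Finset.mem_range] at hk
    have e : i + 1 + m - k - 1 = i + (m+1) - k - 1 := by omega
    rw [e]
  rw [Finset.sum_range_succ, Finset.sum_congr rfl h1,
    show i + 1 + m - i - 1 = m from by omega]

lemma Fs_succ_right (u v z : ℕ → ℝ) (i j m : ℕ) :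
    Fs u v z j (i+1) m = Fs u v z j i (m+1)
      + (v i * Qs u v j m - u i * Qs u z j m + u m * Qs u z i j - Qs u v i j * v m) := by
  have hterm : ∀ l ∈ Finset.range j,
      (Qs u v (i+1) (j + m - l - 1) * v l + u (j + m - l - 1) * Qs u z (i+1) l
        - Qs u v (i+1) l * v (j + m - l - 1) - u l * Qs u z (i+1) (j + m - l - 1))
      = (Qs u v i (j + (m+1) - l - 1) * v l + u (j + (m+1) - l - 1) * Qs u z i l
          - Qs u v i l * v (j + (m+1) - l - 1) - u l * Qs u z i (j + (m+1) - l - 1))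
        + (u (j + m - (l+1)) * Qs u z i (l+1) - u (j + m - l) * Qs u z i l)
        + (Qs u v i l * v (j + m - l) - Qs u v i (l+1) * v (j + m - (l+1)))
        + (v i * (u (j + m - l - 1) * v l - u l * v (j + m - l - 1))
            - u i * (u (j + m - l - 1) * z l - u l * z (j + m - l - 1))) := by
    intro l hl
    simp only [Finset.mem_range] at hl
    rw [Qs_succ u v i (j + m - l - 1), Qs_succ u z i l, Qs_succ u v i l,
      Qs_succ u z i (j + m - l - 1)]
    have e1 : j + m - l - 1 + 1 = j + m - l := by omega
    have e2 : j + (m+1) - l - 1 = j + m - l := by omega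
    have e3 : j + m - (l+1) = j + m - l - 1 := by omega
    rw [e1, e2, e3]
    ring
  unfold Fs
  rw [Finset.sum_congr rfl hterm]
  rw [Finset.sum_add_distrib, Finset.sum_add_distrib, Finset.sum_add_distrib]
  have tele1 : ∑ l ∈ Finset.range j,
      (u (j + m - (l+1)) * Qs u z i (l+1) - u (j + m - l) * Qs u z i l)
      = u (j + m - j) * Qs u z i j - u (j + m - 0) * Qs u z i 0 :=
    Finset.sum_range_sub (fun l => u (j + m - l) * Qs u z i l) j
  have tele2 : ∑ l ∈ Finset.range j,
      (Qs u v i l * v (j + m - l) - Qs u v i (l+1) * v (j + m - (l+1)))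
      = Qs u v i 0 * v (j + m - 0) - Qs u v i j * v (j + m - j) :=
    Finset.sum_range_sub' (fun l => Qs u v i l * v (j + m - l)) j
  rw [tele1, tele2]
  have last : ∑ l ∈ Finset.range j,
      (v i * (u (j + m - l - 1) * v l - u l * v (j + m - l - 1))
        - u i * (u (j + m - l - 1) * z l - u l * z (j + m - l - 1)))
      = v i * Qs u v j m - u i * Qs u z j m := by
    rw [Finset.sum_sub_distrib, ← Finset.mul_sum, ← Finset.mul_sum]
    rfl
  rw [last, Qs_zero', Qs_zero']
  have e4 : j + m - j = m := by omega
  rw [e4]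
  ring

lemma Fs_symm (u v z : ℕ → ℝ) : ∀ i j m, Fs u v z i j m = Fs u v z j i m := by
  intro i
  induction i with
  | zero =>
      intro j m
      simp [Fs, Qs]
  | succ i ih =>
      intro j m
      rw [Fs_succ_left, Fs_succ_right, ih j (m+1),
        Qs_symm u v j i, Qs_symm u z j i]
      ring

end AuxAlgebra

section AuxAnalysis

lemma pd_sum {α : Type*} (iv : Fin 3) (s : Finset α) (f : α → (Fin 3 → ℝ) → ℝ)
    (p : Fin 3 → ℝ) (hf : ∀ a ∈ s, DifferentiableAt ℝ (f a) p) :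
    pd 3 iv (fun r => ∑ a ∈ s, f a r) p = ∑ a ∈ s, pd 3 iv (f a) p := by
  unfold pd
  rw [fderiv_fun_sum hf]
  simp

lemma pd_mul_s16 (iv : Fin 3) (f g : (Fin 3 → ℝ) → ℝ) (p : Fin 3 → ℝ)
    (hf : DifferentiableAt ℝ f p) (hg : DifferentiableAt ℝ g p) :
    pd 3 iv (fun r => f r * g r) p = f p * pd 3 iv g p + pd 3 iv f p * g p := by
  unfold pd
  rw [fderiv_fun_mul hf hg]
  simp [mul_comm]

lemma pd_sub_s16 (iv : Fin 3) (f g : (Fin 3 → ℝ) → ℝ) (p : Fin 3 → ℝ)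
    (hf : DifferentiableAt ℝ f p) (hg : DifferentiableAt ℝ g p) :
    pd 3 iv (fun r => f r - g r) p = pd 3 iv f p - pd 3 iv g p := by
  unfold pd
  rw [fderiv_fun_sub hf hg]
  simp

lemma pd_contDiff (iv : Fin 3) (f : (Fin 3 → ℝ) → ℝ) (hf : ContDiff ℝ (⊤ : ℕ∞) f) :
    ContDiff ℝ (⊤ : ℕ∞) (pd 3 iv f) :=
  (hf.fderiv_right (le_refl _)).clm_apply contDiff_const

lemma pd_comm (f : (Fin 3 → ℝ) → ℝ) (hf : ContDiff ℝ (⊤ : ℕ∞) f) (a b : Fin 3)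
    (p : Fin 3 → ℝ) : pd 3 a (pd 3 b f) p = pd 3 b (pd 3 a f) p := by
  have hd : Differentiable ℝ (fderiv ℝ f) :=
    (hf.fderiv_right (m := (⊤ : ℕ∞)) (le_refl _)).differentiable (by simp)
  have hsym := ((hf.contDiffAt (x := p)).isSymmSndFDerivAt (by rw [minSmoothness_of_isRCLikeNormedField]; exact WithTop.coe_le_coe.mpr (le_top : (2 : ℕ∞) ≤ ⊤))).eq
      (Pi.single a 1) (Pi.single b 1)
  unfold pd
  rw [fderiv_clm_apply (hd p) (differentiableAt_const _),
    fderiv_clm_apply (hd p) (differentiableAt_const _)]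
  simp [hsym]

end AuxAnalysis

/-- Coordinates `(x, τᵢ, τⱼ) = (0,1,2)`. The coefficient flows
`(w_m)_{τᵢ} = Σ_{k<i}(w_{i+m−k−1}(w_k)_x − w_k (w_{i+m−k−1})_x)` and the analogous flow
with `j` in place of `i` commute on each `w_m`: the mixed `τᵢτⱼ`-derivatives, computed by
substituting the evolution equations, agree. -/
theorem stmt_16 (w : ℕ → (Fin 3 → ℝ) → ℝ) (i j : ℕ) (hi : 1 ≤ i) (hj : 1 ≤ j)
    (hw : ∀ m, ContDiff ℝ (⊤ : ℕ∞) (w m))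
    (hti : ∀ m : ℕ, ∀ p, pd 3 1 (w m) p
        = ∑ k ∈ Finset.range i,
            (w (i + m - k - 1) p * pd 3 0 (w k) p
              - w k p * pd 3 0 (w (i + m - k - 1)) p))
    (htj : ∀ m : ℕ, ∀ p, pd 3 2 (w m) p
        = ∑ k ∈ Finset.range j,
            (w (j + m - k - 1) p * pd 3 0 (w k) p
              - w k p * pd 3 0 (w (j + m - k - 1)) p)) :
    ∀ m : ℕ, ∀ p,
      pd 3 2 (fun r => ∑ k ∈ Finset.range i,
          (w (i + m - k - 1) r * pd 3 0 (w k) r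
            - w k r * pd 3 0 (w (i + m - k - 1)) r)) p
      = pd 3 1 (fun r => ∑ k ∈ Finset.range j,
          (w (j + m - k - 1) r * pd 3 0 (w k) r
            - w k r * pd 3 0 (w (j + m - k - 1)) r)) p := by
  intro m p
  -- differentiability facts
  have hDw : ∀ n (q : Fin 3 → ℝ), DifferentiableAt ℝ (w n) q :=
    fun n q => ((hw n).differentiable (by simp)).differentiableAt
  have hCV : ∀ n, ContDiff ℝ (⊤ : ℕ∞) (pd 3 0 (w n)) := fun n => pd_contDiff _ _ (hw n)
  have hDV : ∀ n (q : Fin 3 → ℝ), DifferentiableAt ℝ (pd 3 0 (w n)) q :=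
    fun n q => ((hCV n).differentiable (by simp)).differentiableAt
  have hDterm : ∀ (a b : ℕ) (q : Fin 3 → ℝ),
      DifferentiableAt ℝ (fun r => w a r * pd 3 0 (w b) r - w b r * pd 3 0 (w a) r) q :=
    fun a b q => ((hDw a q).mul (hDV b q)).sub ((hDw b q).mul (hDV a q))
  -- expanding a τ-derivative of a flow sum
  have hexpand : ∀ (iv : Fin 3) (c mm : ℕ) (q : Fin 3 → ℝ),
      pd 3 iv (fun r => ∑ k ∈ Finset.range c,
          (w (c + mm - k - 1) r * pd 3 0 (w k) r
            - w k r * pd 3 0 (w (c + mm - k - 1)) r)) q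
      = ∑ k ∈ Finset.range c,
          (pd 3 iv (w (c + mm - k - 1)) q * pd 3 0 (w k) q
            + w (c + mm - k - 1) q * pd 3 iv (pd 3 0 (w k)) q
            - (pd 3 iv (w k) q * pd 3 0 (w (c + mm - k - 1)) q
                + w k q * pd 3 iv (pd 3 0 (w (c + mm - k - 1))) q)) := by
    intro iv c mm q
    rw [pd_sum iv _ _ q (fun a _ => hDterm _ _ q)]
    apply Finset.sum_congr rfl
    intro k hk
    rw [pd_sub_s16 iv (fun r => w _ r * pd 3 0 (w _) r) (fun r => w _ r * pd 3 0 (w _) r) q ((hDw _ q).mul (hDV _ q)) ((hDw _ q).mul (hDV _ q)),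
      pd_mul_s16 iv _ _ q (hDw _ q) (hDV _ q), pd_mul_s16 iv _ _ q (hDw _ q) (hDV _ q)]
    ring
  -- abbreviations at the point p
  set u : ℕ → ℝ := fun t => w t p with hu
  set v : ℕ → ℝ := fun t => pd 3 0 (w t) p with hv
  set z : ℕ → ℝ := fun t => pd 3 0 (pd 3 0 (w t)) p with hz
  -- first derivatives in terms of Qs
  have hQ2 : ∀ (n : ℕ) (q : Fin 3 → ℝ), pd 3 2 (w n) q
      = Qs (fun t => w t q) (fun t => pd 3 0 (w t) q) j n := fun n q => htj n q
  have hQ1 : ∀ (n : ℕ) (q : Fin 3 → ℝ), pd 3 1 (w n) q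
      = Qs (fun t => w t q) (fun t => pd 3 0 (w t) q) i n := fun n q => hti n q
  -- mixed second derivatives in terms of Qs
  have hmix : ∀ (iv : Fin 3) (c : ℕ),
      (∀ (n : ℕ) (q : Fin 3 → ℝ), pd 3 iv (w n) q
        = Qs (fun t => w t q) (fun t => pd 3 0 (w t) q) c n) →
      ∀ (n : ℕ), pd 3 iv (pd 3 0 (w n)) p
        = Qs u (fun t => pd 3 0 (pd 3 0 (w t)) p) c n := by
    intro iv c hQ n
    rw [pd_comm (w n) (hw n) iv 0 p]
    have hfun : pd 3 iv (w n) = fun r => ∑ l ∈ Finset.range c,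
        (w (c + n - l - 1) r * pd 3 0 (w l) r - w l r * pd 3 0 (w (c + n - l - 1)) r) := by
      funext q
      exact hQ n q
    rw [hfun, pd_sum 0 _ _ p (fun a _ => hDterm _ _ p)]
    unfold Qs
    apply Finset.sum_congr rfl
    intro l hl
    rw [pd_sub_s16 0 (fun r => w _ r * pd 3 0 (w _) r) (fun r => w _ r * pd 3 0 (w _) r) p ((hDw _ p).mul (hDV _ p)) ((hDw _ p).mul (hDV _ p)),
      pd_mul_s16 0 _ _ p (hDw _ p) (hDV _ p), pd_mul_s16 0 _ _ p (hDw _ p) (hDV _ p)]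
    show w (c + n - l - 1) p * pd 3 0 (pd 3 0 (w l)) p
          + pd 3 0 (w (c + n - l - 1)) p * pd 3 0 (w l) p
        - (w l p * pd 3 0 (pd 3 0 (w (c + n - l - 1))) p
            + pd 3 0 (w l) p * pd 3 0 (w (c + n - l - 1)) p)
      = u (c + n - l - 1) * pd 3 0 (pd 3 0 (w l)) p
        - u l * pd 3 0 (pd 3 0 (w (c + n - l - 1))) p
    simp only [hu]
    ring
  have hmix2 := hmix 2 j hQ2
  have hmix1 := hmix 1 i hQ1
  -- reduce both sides to Fs
  rw [hexpand 2 i m p, hexpand 1 j m p]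
  have hL : ∑ k ∈ Finset.range i,
      (pd 3 2 (w (i + m - k - 1)) p * pd 3 0 (w k) p
        + w (i + m - k - 1) p * pd 3 2 (pd 3 0 (w k)) p
        - (pd 3 2 (w k) p * pd 3 0 (w (i + m - k - 1)) p
            + w k p * pd 3 2 (pd 3 0 (w (i + m - k - 1))) p))
      = Fs u v z i j m := by
    unfold Fs
    apply Finset.sum_congr rfl
    intro k hk
    rw [hQ2 (i + m - k - 1) p, hQ2 k p, hmix2 k, hmix2 (i + m - k - 1)]
    ring
  have hR : ∑ k ∈ Finset.range j,
      (pd 3 1 (w (j + m - k - 1)) p * pd 3 0 (w k) p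
        + w (j + m - k - 1) p * pd 3 1 (pd 3 0 (w k)) p
        - (pd 3 1 (w k) p * pd 3 0 (w (j + m - k - 1)) p
            + w k p * pd 3 1 (pd 3 0 (w (j + m - k - 1))) p))
      = Fs u v z j i m := by
    unfold Fs
    apply Finset.sum_congr rfl
    intro k hk
    rw [hQ1 (j + m - k - 1) p, hQ1 k p, hmix1 k, hmix1 (j + m - k - 1)]
    ring
  rw [hL, hR, Fs_symm u v z i j m]
end
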